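/- arXiv:1904.11090 — 8 statements merged into one kernel-verified Lean document; each statement's English description precedes it below -/
import Mathlib

section
/- (Specker's theorem.) For every homomorphism of additive groups φ : (ℕ → ℤ) → ℤ there exists a unique finitely supported p ∈ (ℕ →₀ ℤ) such that φ(m) = ∑ i, p i * m i for all m ∈ (ℕ → ℤ). Equivalently, the map from (ℕ →₀ ℤ) to the group of additive homomorphisms (ℕ → ℤ) → ℤ, sending p to the homomorphism m ↦ ∑ i, p i * m i, is an isomorphism of additive groups. -/
/-!
A homomorphism `φ : (ℕ → ℤ) →+ ℤ` is determined modulo `d` by its values on the basis vectors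
`eₙ` whenever the sequence is divisible by `d` from index `k` on: then
`φ x ≡ ∑_{n<k} xₙ φ(eₙ) [ZMOD d]`.

If `φ` kills every `eₙ`, a sequence with `bⁿ ∣ xₙ` has `φ x` divisible by every power of `b`, so
`φ x = 0`; since `2ⁿ` and `3ⁿ` are coprime, every sequence is a sum of two such, hence `φ = 0`.

To see that `aₙ = φ(eₙ)` vanishes for large `n`, choose weights `b₀ ∣ b₁ ∣ ⋯` growing so fast
that `bₖ > |sₖ| + k`, where `sₖ = ∑_{i<k} bᵢ aᵢ`. Then `bₖ ∣ φ b - sₖ` and `|φ b - sₖ| < bₖ` once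
`k ≥ |φ b|`, so `sₖ = φ b` for all large `k`, and `bₖ aₖ = sₖ₊₁ - sₖ = 0`.
-/

namespace Specker

open Finset Filter

theorem dvd_map_of_forall_dvd {ι : Type*} (φ : (ι → ℤ) →+ ℤ) {d : ℤ} {x : ι → ℤ}
    (h : ∀ i, d ∣ x i) : d ∣ φ x := by
  choose y hy using h
  rw [show x = d • y from funext hy, map_zsmul, smul_eq_mul]
  exact dvd_mul_right _ _

theorem dvd_map_sub_sum_of_dvd (φ : (ℕ → ℤ) →+ ℤ) {d : ℤ} {k : ℕ} {x : ℕ → ℤ}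
    (h : ∀ n, k ≤ n → d ∣ x n) :
    d ∣ φ x - ∑ n ∈ range k, x n * φ (Pi.single n 1) := by
  have hsplit : x = ∑ n ∈ range k, x n • Pi.single n 1 + {n | k ≤ n}.indicator x := by
    ext n
    by_cases hn : k ≤ n <;> simp [Set.indicator, hn, Finset.sum_apply, Pi.single_apply]
  have hφx : φ x = ∑ n ∈ range k, x n * φ (Pi.single n 1) + φ ({n | k ≤ n}.indicator x) := by
    conv_lhs => rw [hsplit]
    simp only [map_add, map_sum, map_zsmul, smul_eq_mul]
  rw [hφx, add_sub_cancel_left]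
  refine dvd_map_of_forall_dvd φ fun n => ?_
  by_cases hn : k ≤ n <;> simp [hn, h]

theorem eq_zero_of_forall_pow_dvd {b N : ℤ} (hb : 2 ≤ b) (h : ∀ k : ℕ, b ^ k ∣ N) : N = 0 := by
  refine Int.eq_zero_of_abs_lt_dvd (h N.natAbs) ?_
  calc |N| = (N.natAbs : ℤ) := Int.abs_eq_natAbs N
    _ < 2 ^ N.natAbs := by exact_mod_cast Nat.lt_two_pow_self
    _ ≤ b ^ N.natAbs := pow_le_pow_left₀ (by norm_num) hb _

section Vanishing

variable {φ : (ℕ → ℤ) →+ ℤ} (hφ : ∀ n, φ (Pi.single n 1) = 0)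
include hφ

theorem map_eq_zero_of_pow_dvd {b : ℤ} (hb : 2 ≤ b) {x : ℕ → ℤ} (hx : ∀ n, b ^ n ∣ x n) :
    φ x = 0 :=
  eq_zero_of_forall_pow_dvd hb fun k => by
    simpa [hφ] using dvd_map_sub_sum_of_dvd φ fun n hn => (pow_dvd_pow b hn).trans (hx n)

theorem eq_zero_of_map_single_eq_zero : φ = 0 := by
  refine AddMonoidHom.ext fun x => ?_
  have hcop : IsCoprime (2 : ℤ) 3 := Int.isCoprime_iff_gcd_eq_one.2 rfl
  choose u v huv using fun n : ℕ => hcop.pow (m := n) (n := n)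
  have hx : x = (fun n => 2 ^ n * (u n * x n)) + fun n => 3 ^ n * (v n * x n) := by
    ext n
    simp only [Pi.add_apply]
    linear_combination (-x n) * huv n
  rw [hx, map_add, map_eq_zero_of_pow_dvd hφ le_rfl fun n => dvd_mul_right _ _,
    map_eq_zero_of_pow_dvd hφ (by norm_num) fun n => dvd_mul_right _ _, add_zero,
    AddMonoidHom.zero_apply]

end Vanishing

/-- The pair `(bₖ, sₖ)` of the proof idea. -/
def weightAndPartialSum (a : ℕ → ℤ) : ℕ → ℤ × ℤ
  | 0 => (1, 0)
  | k + 1 =>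
    let q := weightAndPartialSum a k
    (q.1 * (|q.2 + q.1 * a k| + k + 2), q.2 + q.1 * a k)

def weight (a : ℕ → ℤ) (k : ℕ) : ℤ := (weightAndPartialSum a k).1

section Weights

variable (a : ℕ → ℤ)

theorem weightAndPartialSum_snd (k : ℕ) :
    (weightAndPartialSum a k).2 = ∑ i ∈ range k, weight a i * a i := by
  induction k with
  | zero => rfl
  | succ k ih => rw [sum_range_succ, ← ih]; rfl

theorem weight_succ (k : ℕ) :
    weight a (k + 1) = weight a k * (|∑ i ∈ range (k + 1), weight a i * a i| + k + 2) := by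
  rw [sum_range_succ, ← weightAndPartialSum_snd]; rfl

theorem abs_sum_add_lt_weight (k : ℕ) : |∑ i ∈ range k, weight a i * a i| + k < weight a k := by
  induction k with
  | zero => simp [weight, weightAndPartialSum]
  | succ k ih =>
    rw [weight_succ]
    have h1 : 1 ≤ weight a k := by linarith [abs_nonneg (∑ i ∈ range k, weight a i * a i)]
    have h2 : 0 ≤ |∑ i ∈ range (k + 1), weight a i * a i| := abs_nonneg _
    push_cast
    nlinarith

theorem weight_pos (k : ℕ) : 0 < weight a k := by
  linarith [abs_sum_add_lt_weight a k, abs_nonneg (∑ i ∈ range k, weight a i * a i)]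

theorem weight_dvd_weight {k m : ℕ} (h : k ≤ m) : weight a k ∣ weight a m := by
  induction m, h using Nat.le_induction with
  | base => rfl
  | succ m _ ih => exact ih.trans (weight_succ a m ▸ dvd_mul_right _ _)

end Weights

theorem eventually_map_single_eq_zero (φ : (ℕ → ℤ) →+ ℤ) :
    ∀ᶠ n in atTop, φ (Pi.single n 1) = 0 := by
  set a := fun n => φ (Pi.single n 1)
  have hpartial : ∀ k ≥ (φ (weight a)).natAbs,
      φ (weight a) = ∑ i ∈ range k, weight a i * a i := by
    intro k hk
    have hdvd := dvd_map_sub_sum_of_dvd φ (k := k) fun n hn => weight_dvd_weight a hn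
    refine sub_eq_zero.1 (Int.eq_zero_of_abs_lt_dvd hdvd ?_)
    have hweight := abs_sum_add_lt_weight a k
    have hφ : |φ (weight a)| ≤ k := by rw [Int.abs_eq_natAbs]; exact_mod_cast hk
    linarith [abs_sub (φ (weight a)) (∑ i ∈ range k, weight a i * a i)]
  filter_upwards [eventually_ge_atTop (φ (weight a)).natAbs] with k hk
  have hsucc := (hpartial (k + 1) (by omega)).symm.trans (hpartial k hk)
  rw [sum_range_succ, add_eq_left] at hsucc
  exact (mul_eq_zero.1 hsucc).resolve_left (weight_pos a k).ne'

noncomputable def dotProductHom : (ℕ →₀ ℤ) →+ (ℕ → ℤ) →+ ℤ :=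
  Finsupp.liftAddHom fun i => AddMonoidHom.mul.compl₂ (Pi.evalAddMonoidHom (fun _ => ℤ) i)

theorem dotProductHom_apply (p : ℕ →₀ ℤ) (m : ℕ → ℤ) :
    dotProductHom p m = p.sum fun i pi => pi * m i := by
  simp [dotProductHom, Finsupp.liftAddHom_apply, AddMonoidHom.finsuppSum_apply]

theorem dotProductHom_apply_single (p : ℕ →₀ ℤ) (n : ℕ) :
    dotProductHom p (Pi.single n 1) = p n := by
  simp [dotProductHom_apply, Pi.single_apply, eq_comm]

theorem dotProductHom_injective : Function.Injective dotProductHom := fun p q h =>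
  Finsupp.ext fun n => by
    simpa only [dotProductHom_apply_single] using DFunLike.congr_fun h (Pi.single n 1)

theorem dotProductHom_surjective : Function.Surjective dotProductHom := by
  intro φ
  have hfin : (Function.support fun n => φ (Pi.single n 1)).Finite :=
    eventually_cofinite.1 (Nat.cofinite_eq_atTop ▸ eventually_map_single_eq_zero φ)
  refine ⟨Finsupp.ofSupportFinite _ hfin, (sub_eq_zero.1 ?_).symm⟩
  exact eq_zero_of_map_single_eq_zero fun n => by
    simp [dotProductHom_apply_single, Finsupp.ofSupportFinite_coe]

end Specker

/-- Specker's theorem: every additive group homomorphism `(ℕ → ℤ) → ℤ` is given by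
dot product with a finitely supported sequence; i.e. the map sending
`p : ℕ →₀ ℤ` to the homomorphism `m ↦ ∑ i, p i * m i` is an isomorphism of
additive groups from `ℤ^∞` to the dual of `ℤ^ω`. -/
theorem specker_zinfty_dual_of_zomega :
    ∃ e : (ℕ →₀ ℤ) ≃+ ((ℕ → ℤ) →+ ℤ),
      ∀ (p : ℕ →₀ ℤ) (m : ℕ → ℤ), e p m = p.sum fun i pi => pi * m i :=
  ⟨AddEquiv.ofBijective Specker.dotProductHom
    ⟨Specker.dotProductHom_injective, Specker.dotProductHom_surjective⟩,
    Specker.dotProductHom_apply⟩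
end

section
/- Let n : ℕ → ℕ be a strictly increasing sequence of positive integers and for each i let f i : (Fin (n (i+1)) → ℤ) → (Fin (n i) → ℤ) be a surjective homomorphism of additive groups (such a homomorphism between finitely generated free abelian groups automatically admits a section, i.e. the projective system is split). Then the projective limit, namely the subgroup L = { x ∈ ∏ i, (Fin (n i) → ℤ) | ∀ i, f i (x (i+1)) = x i } of the product with componentwise addition, is isomorphic as an additive group to ℕ → ℤ. -/
/-!
Since `ℤ^{n i}` is projective, each `f i` has a section `s i`, and a compatible sequence `x` is
determined by `x 0` and the kernel elements `x (i + 1) - s i (x i)`; conversely any such data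
build a compatible sequence by recursion. Hence the limit is `ℤ^{n 0} × ∏ i, ker (f i)`, and
`ker (f i) ≅ ℤ^{n (i + 1) - n i}` is nonzero because the ranks increase strictly. A product of
countably many copies of `ℤ` indexed by an infinite set is `ℤ^ω`.
-/

open Function

section ProjLimit

variable {X : ℕ → Type*} [∀ i, AddCommGroup (X i)]

def projLimit (f : ∀ i, X (i + 1) →+ X i) : AddSubgroup (∀ i, X i) where
  carrier := {x | ∀ i, f i (x (i + 1)) = x i}
  zero_mem' i := map_zero (f i)
  add_mem' hx hy i := by simp only [Pi.add_apply, map_add, hx i, hy i]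
  neg_mem' hx i := by simp only [Pi.neg_apply, map_neg, hx i]

variable {f : ∀ i, X (i + 1) →+ X i} (s : ∀ i, X i →+ X (i + 1))

def projLimitOfKer (a : X 0) (k : ∀ i, (f i).ker) : ∀ i, X i
  | 0 => a
  | i + 1 => s i (projLimitOfKer a k i) + k i

variable {s} (hs : ∀ i, RightInverse (s i) (f i))
include hs

theorem projLimitOfKer_mem (a : X 0) (k : ∀ i, (f i).ker) :
    projLimitOfKer s a k ∈ projLimit f :=
  fun i => by rw [projLimitOfKer, map_add, hs i, (k i).2, add_zero]

theorem projLimit_sub_section_mem_ker {x : ∀ i, X i} (hx : x ∈ projLimit f) (i : ℕ) :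
    x (i + 1) - s i (x i) ∈ (f i).ker := by
  rw [AddMonoidHom.mem_ker, map_sub, hx i, hs i, sub_self]

theorem projLimitOfKer_sub_section {x : ∀ i, X i} (hx : x ∈ projLimit f) :
    projLimitOfKer s (x 0) (fun i => ⟨_, projLimit_sub_section_mem_ker hs hx i⟩) = x := by
  funext i
  induction i with
  | zero => rfl
  | succ i ih => rw [projLimitOfKer, ih, add_sub_cancel]

def projLimitEquivProdKer : projLimit f ≃+ X 0 × ∀ i, (f i).ker where
  toFun x := (x.1 0, fun i => ⟨_, projLimit_sub_section_mem_ker hs x.2 i⟩)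
  invFun p := ⟨projLimitOfKer s p.1 p.2, projLimitOfKer_mem hs p.1 p.2⟩
  left_inv x := Subtype.ext (projLimitOfKer_sub_section hs x.2)
  right_inv p := Prod.ext rfl <| funext fun i => Subtype.ext <| add_sub_cancel_left _ _
  map_add' x y := Prod.ext rfl <| funext fun i => Subtype.ext <| by
    simp only [Prod.snd_add, Pi.add_apply, AddSubgroup.coe_add, map_add]
    abel

end ProjLimit

theorem AddMonoidHom.exists_rightInverse_of_surjective {A B : Type*} [AddCommGroup A]
    [AddCommGroup B] [Module.Projective ℤ B] {f : A →+ B} (hf : Surjective f) :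
    ∃ s : B →+ A, RightInverse s f := by
  obtain ⟨s, hs⟩ := Module.projective_lifting_property f.toIntLinearMap LinearMap.id hf
  exact ⟨s.toAddMonoidHom, LinearMap.congr_fun hs⟩

theorem AddMonoidHom.nonempty_ker_addEquiv_of_surjective {m k : ℕ}
    {f : (Fin m → ℤ) →+ (Fin k → ℤ)} (hf : Surjective f) :
    Nonempty (f.ker ≃+ (Fin (m - k) → ℤ)) := by
  set K := LinearMap.ker f.toIntLinearMap
  have hrank : Module.finrank ℤ K = m - k := by
    have h := K.finrank_quotient_add_finrank
    rw [(f.toIntLinearMap.quotKerEquivOfSurjective hf).finrank_eq] at h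
    simp only [Module.finrank_fin_fun] at h
    omega
  exact ⟨(Module.finBasisOfFinrankEq ℤ K hrank).equivFun.toAddEquiv⟩

theorem nonempty_prod_pi_addEquiv_nat_arrow (M : Type*) [AddCommMonoid M] {ι : Type*}
    {κ : ℕ → Type*} [Countable ι] [∀ i, Countable (κ i)] [∀ i, Nonempty (κ i)] :
    Nonempty (((ι → M) × ∀ i, κ i → M) ≃+ (ℕ → M)) := by
  obtain ⟨_⟩ := nonempty_denumerable (ι ⊕ Σ i, κ i)
  let uncurry := (LinearEquiv.piCurry ℕ (κ := κ) fun _ _ => M).symm.toAddEquiv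
  let merge := (LinearEquiv.sumArrowLequivProdArrow ι (Σ i, κ i) ℕ M).symm.toAddEquiv
  let reindex :=
    (LinearEquiv.funCongrLeft ℕ M (Denumerable.eqv (ι ⊕ Σ i, κ i)).symm).toAddEquiv
  exact ⟨((AddEquiv.refl _).prodCongr uncurry).trans (merge.trans reindex)⟩

theorem projlim_split_system_iso_zomega_general
    (n : ℕ → ℕ) (hmono : StrictMono n)
    (f : ∀ i, ((Fin (n (i + 1)) → ℤ) →+ (Fin (n i) → ℤ)))
    (hsurj : ∀ i, Function.Surjective (f i))
    (L : AddSubgroup (∀ i, Fin (n i) → ℤ))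
    (hL : (L : Set (∀ i, Fin (n i) → ℤ)) = {x | ∀ i, f i (x (i + 1)) = x i}) :
    Nonempty (L ≃+ (ℕ → ℤ)) := by
  obtain rfl : L = projLimit f := SetLike.coe_injective hL
  choose s hs using fun i => (f i).exists_rightInverse_of_surjective (hsurj i)
  have eKer i := ((f i).nonempty_ker_addEquiv_of_surjective (hsurj i)).some
  have : ∀ i, Nonempty (Fin (n (i + 1) - n i)) := fun i =>
    Fin.pos_iff_nonempty.mp (Nat.sub_pos_of_lt (hmono i.lt_succ_self))
  obtain ⟨e⟩ := nonempty_prod_pi_addEquiv_nat_arrow ℤ (ι := Fin (n 0))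
    (κ := fun i => Fin (n (i + 1) - n i))
  exact ⟨(projLimitEquivProdKer hs).trans <|
    (AddEquiv.prodCongr (.refl _) (AddEquiv.piCongrRight eKer)).trans e⟩

/-- The projective limit of a projective system `ℤ^{n 1} ← ℤ^{n 2} ← ⋯` of surjective
homomorphisms between free abelian groups of strictly increasing positive ranks is
isomorphic to the Baer–Specker group `ℤ^ω = ℕ → ℤ`. -/
theorem projlim_split_system_iso_zomega
    (n : ℕ → ℕ) (hmono : StrictMono n) (hpos : ∀ i, 0 < n i)
    (f : ∀ i, ((Fin (n (i + 1)) → ℤ) →+ (Fin (n i) → ℤ)))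
    (hsurj : ∀ i, Function.Surjective (f i))
    (L : AddSubgroup (∀ i, Fin (n i) → ℤ))
    (hL : (L : Set (∀ i, Fin (n i) → ℤ)) = {x | ∀ i, f i (x (i + 1)) = x i}) :
    Nonempty (L ≃+ (ℕ → ℤ)) :=
  projlim_split_system_iso_zomega_general n hmono f hsurj L hL
end

section
/- Endow ℕ → ℤ with the product topology, where ℤ carries the discrete topology. Then every homomorphism of additive groups β : (ℕ → ℤ) → (ℕ → ℤ) is continuous. Equivalently, for every i ∈ ℕ there exists j ∈ ℕ such that for every m ∈ (ℕ → ℤ) with m k = 0 for all k < j, one has (β m) k = 0 for all k < i. -/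
/-- Auxiliary recursion: given `a : ℕ → ℤ`, produce pairs `(d n, s n)` with
`d 0 = 1`, `s 0 = 0`, `s (n+1) = s n + d n * a n`,
`d (n+1) = d n * 2 * (|s (n+1)| + 1)`. -/
def speckerDS (a : ℕ → ℤ) : ℕ → ℤ × ℤ
  | 0 => (1, 0)
  | n + 1 =>
    let p := speckerDS a n
    (p.1 * 2 * (|p.2 + p.1 * a n| + 1), p.2 + p.1 * a n)

theorem specker_key (φ : (ℕ → ℤ) →+ ℤ) :
    ∃ j : ℕ, ∀ m : ℕ → ℤ, (∀ k < j, m k = 0) → φ m = 0 := by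
  by_contra hcon
  push_neg at hcon
  choose m hm0 hmne using hcon
  set a : ℕ → ℤ := fun n => φ (m n) with ha
  set d : ℕ → ℤ := fun n => (speckerDS a n).1 with hd
  set s : ℕ → ℤ := fun n => (speckerDS a n).2 with hs
  have hd0 : d 0 = 1 := rfl
  have hs0 : s 0 = 0 := rfl
  have hsucc_s : ∀ n, s (n + 1) = s n + d n * a n := fun n => rfl
  have hsucc_d : ∀ n, d (n + 1) = d n * 2 * (|s (n + 1)| + 1) := fun n => rfl
  have hdpos : ∀ n, 0 < d n := by
    intro n
    induction n with
    | zero => simp [hd0]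
    | succ n ih =>
      rw [hsucc_d]
      have h1 : (0:ℤ) < |s (n+1)| + 1 := by positivity
      positivity
  have hsbound : ∀ n, 2 * |s n| < d n := by
    intro n
    cases n with
    | zero => simp [hd0, hs0]
    | succ n =>
      rw [hsucc_d]
      have h1 : (1:ℤ) ≤ d n := hdpos n
      nlinarith [abs_nonneg (s (n+1))]
  have hdvd : ∀ N n, N ≤ n → d N ∣ d n := by
    intro N n hNn
    induction n with
    | zero => simp [Nat.le_zero.mp hNn]
    | succ n ih =>
      rcases Nat.lt_or_ge N (n+1) with h | h
      · have := ih (by omega)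
        rw [hsucc_d]
        exact Dvd.dvd.mul_right (Dvd.dvd.mul_right this 2) _
      · have : N = n + 1 := by omega
        rw [this]
  have hdgrow : ∀ n, (2:ℤ) ^ n ≤ d n := by
    intro n
    induction n with
    | zero => simp [hd0]
    | succ n ih =>
      rw [hsucc_d]
      have h1 := abs_nonneg (s (n+1))
      have h2 := hdpos n
      have h3 : (0:ℤ) < 2^n := by positivity
      have h4 : (2:ℤ)^(n+1) = 2^n * 2 := pow_succ 2 n
      nlinarith [mul_nonneg (mul_pos h2 two_pos).le h1]
  have hsformula : ∀ N, s N = ∑ n ∈ Finset.range N, d n * a n := by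
    intro N
    induction N with
    | zero => simp [hs0]
    | succ N ih => rw [hsucc_s, ih, Finset.sum_range_succ]
  set y : ℕ → ℤ := fun k => ∑ n ∈ Finset.range (k + 1), d n * m n k with hy
  have hkey : ∀ N, d N ∣ φ y - s N := by
    intro N
    set z : ℕ → ℤ := fun k => (∑ n ∈ Finset.Ico N (N + k + 1), d n * m n k) / d N with hzdef
    have hdvdsum : ∀ k, d N ∣ ∑ n ∈ Finset.Ico N (N + k + 1), d n * m n k := by
      intro k
      exact Finset.dvd_sum fun n hn =>
        Dvd.dvd.mul_right (hdvd N n (Finset.mem_Ico.mp hn).1) _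
    have hz : ∀ k, d N * z k = ∑ n ∈ Finset.Ico N (N + k + 1), d n * m n k := fun k =>
      Int.mul_ediv_cancel' (hdvdsum k)
    have hysplit : y = (∑ n ∈ Finset.range N, d n • m n) + d N • z := by
      funext k
      simp only [Pi.add_apply, Finset.sum_apply, Pi.smul_apply, smul_eq_mul]
      rw [hz k]
      have h1 : ∑ n ∈ Finset.range (k + 1), d n * m n k
          = ∑ n ∈ Finset.range (N + k + 1), d n * m n k := by
        apply Finset.sum_subset
        · intro x hx
          simp only [Finset.mem_range] at hx ⊢
          omega
        · intro n hn hn'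
          simp only [Finset.mem_range] at hn hn'
          rw [hm0 n k (by omega), mul_zero]
      rw [show y k = ∑ n ∈ Finset.range (k + 1), d n * m n k from rfl, h1,
        ← Finset.sum_range_add_sum_Ico _ (by omega : N ≤ N + k + 1)]
    have hφy : φ y = s N + d N * φ z := by
      rw [hysplit, map_add, map_sum, hsformula]
      congr 1
      · exact Finset.sum_congr rfl fun n _ => by
          rw [map_zsmul, smul_eq_mul]
      · rw [map_zsmul, smul_eq_mul]
    rw [hφy]
    simp
  -- pick N₀ with d N₀ large
  obtain ⟨N₀, hN₀⟩ : ∃ N, 2 * |φ y| < d N := by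
    obtain ⟨N, hN⟩ := pow_unbounded_of_one_lt (2 * |φ y|) (by norm_num : (1:ℤ) < 2)
    exact ⟨N, lt_of_lt_of_le hN (hdgrow N)⟩
  have heq : ∀ N, N₀ ≤ N → φ y = s N := by
    intro N hN
    have h1 : d N₀ ≤ d N := Int.le_of_dvd (hdpos N) (hdvd N₀ N hN)
    have h2 : |φ y - s N| < d N := by
      have := hsbound N
      calc |φ y - s N| ≤ |φ y| + |s N| := abs_sub _ _
        _ < d N := by omega
    have := Int.eq_zero_of_abs_lt_dvd (hkey N) h2
    omega
  have e1 := heq N₀ le_rfl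
  have e2 := heq (N₀ + 1) (by omega)
  rw [hsucc_s] at e2
  have : d N₀ * a N₀ = 0 := by omega
  rcases mul_eq_zero.mp this with h | h
  · exact absurd h (by have := hdpos N₀; omega)
  · exact hmne N₀ h

/-- Every additive group endomorphism of the Baer–Specker group `ℤ^ω = ℕ → ℤ` is
continuous for the product topology (`ℤ` discrete); equivalently, for every `i`
there is `j` such that any sequence vanishing in the first `j` coordinates is
mapped to a sequence vanishing in the first `i` coordinates. -/
theorem zomega_endo_continuous (β : (ℕ → ℤ) →+ (ℕ → ℤ)) :
    Continuous β ∧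
      ∀ i : ℕ, ∃ j : ℕ, ∀ m : ℕ → ℤ,
        (∀ k < j, m k = 0) → ∀ k < i, β m k = 0 := by
  have h := fun k : ℕ => specker_key ((Pi.evalAddMonoidHom (fun _ : ℕ => ℤ) k).comp β)
  choose J hJ using h
  have hJ' : ∀ k : ℕ, ∀ m : ℕ → ℤ, (∀ l < J k, m l = 0) → β m k = 0 := by
    intro k m hm
    exact hJ k m hm
  constructor
  · apply continuous_pi
    intro i
    have hfactor : (fun x : ℕ → ℤ => β x i) =
        (fun v : Fin (J i) → ℤ =>
          β (fun k => if h : k < J i then v ⟨k, h⟩ else 0) i) ∘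
        (fun x : ℕ → ℤ => fun t : Fin (J i) => x t) := by
      funext x
      simp only [Function.comp_apply]
      have : β x i - β (fun k => if h : k < J i then x k else 0) i = 0 := by
        rw [← Pi.sub_apply, ← map_sub]
        apply hJ' i
        intro l hl
        simp [hl]
      omega
    rw [hfactor]
    exact Continuous.comp continuous_of_discreteTopology
      (continuous_pi fun t => continuous_apply (t : ℕ))
  · intro i
    refine ⟨(Finset.range i).sup J, fun m hm k hk => ?_⟩
    apply hJ' k
    intro l hl
    apply hm
    exact lt_of_lt_of_le hl (Finset.le_sup (Finset.mem_range.mpr hk))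
end

section
/- For every homomorphism of additive groups β : (ℕ → ℤ) → ℤ there exists j ∈ ℕ such that β(m) = 0 for every m ∈ (ℕ → ℤ) satisfying m k = 0 for all k < j. Equivalently, β is continuous when ℕ → ℤ carries the product topology and ℤ carries the discrete topology. -/
/-!
Specker's argument. If no `j` worked for `β`, pick `m n` vanishing below `n` with `b n := β (m n) ≠ 0`, and
weights `W n := ∏ i < n, (2 |b i| + 2)`. The sum `x := ∑ n, W n • m n` is finite in every
coordinate, and `x - ∑ n < N, W n • m n` has all coordinates divisible by `W N`; hence
`β x ≡ s N := ∑ n < N, W n * b n (mod W N)`. The weights are chosen so that `2 |s N| < W N`,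
so once `W N > 2 |β x|` this congruence forces `β x = s N`. Then `s N = s (N + 1)`, i.e.
`W N * b N = 0`, contradicting `b N ≠ 0`.
-/

open Finset Filter Topology

theorem AddMonoidHom.continuous_of_forall_mem_eq_zero_imp_map_eq_zero {ι A B : Type*}
    [AddGroup A] [TopologicalSpace A] [DiscreteTopology A]
    [AddGroup B] [TopologicalSpace B] [DiscreteTopology B]
    (f : (ι → A) →+ B) (s : Finset ι) (hf : ∀ m : ι → A, (∀ k ∈ s, m k = 0) → f m = 0) :
    Continuous f := by
  refine continuous_of_continuousAt_zero f ?_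
  rw [ContinuousAt, map_zero, nhds_discrete B, tendsto_pure]
  have hs : (s : Set ι).pi (fun _ => {0}) ∈ 𝓝 (0 : ι → A) :=
    set_pi_mem_nhds s.finite_toSet fun _ _ => by simp
  filter_upwards [hs] with m hm using hf m hm

theorem AddMonoidHom.dvd_map_of_forall_dvd {ι : Type*} (f : (ι → ℤ) →+ ℤ) {c : ℤ} {v : ι → ℤ}
    (h : ∀ i, c ∣ v i) : c ∣ f v := by
  choose w hw using h
  have hv : v = c • w := funext hw
  exact ⟨f w, by rw [hv, map_zsmul, smul_eq_mul]⟩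

theorem Int.eq_of_dvd_sub_of_two_mul_abs_lt {a b D : ℤ} (h : D ∣ a - b) (ha : 2 * |a| < D)
    (hb : 2 * |b| < D) : a = b := by
  have : |a - b| < D := by linarith [abs_sub a b]
  linarith [Int.eq_zero_of_abs_lt_dvd h this]

/-- `∑ n, D n • m n`, which is a finite sum in coordinate `k` as soon as `m n k = 0` for `k < n`. -/
def diagonalSum (D : ℕ → ℤ) (m : ℕ → ℕ → ℤ) (k : ℕ) : ℤ :=
  ∑ n ∈ range (k + 1), D n * m n k

section diagonalSum

variable {D : ℕ → ℤ} {m : ℕ → ℕ → ℤ}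

theorem diagonalSum_eq_sum_range (hm : ∀ n k, k < n → m n k = 0) {k M : ℕ} (hkM : k < M) :
    diagonalSum D m k = ∑ n ∈ range M, D n * m n k := by
  refine sum_subset (range_subset_range.mpr hkM) fun n _ hn => ?_
  rw [hm n k (by simpa using hn), mul_zero]

theorem dvd_map_diagonalSum_sub (β : (ℕ → ℤ) →+ ℤ) (hm : ∀ n k, k < n → m n k = 0) {N : ℕ}
    (hD : ∀ n, N ≤ n → D N ∣ D n) :
    D N ∣ β (diagonalSum D m) - ∑ n ∈ range N, D n * β (m n) := by
  simp_rw [← smul_eq_mul, ← map_zsmul, ← map_sum, ← map_sub]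
  refine β.dvd_map_of_forall_dvd fun k => ?_
  have hN : N ≤ max N (k + 1) := le_max_left _ _
  simp only [Pi.sub_apply, Finset.sum_apply, Pi.smul_apply, smul_eq_mul,
    diagonalSum_eq_sum_range hm (lt_of_lt_of_le k.lt_succ_self (le_max_right N (k + 1))),
    ← sum_Ico_eq_sub _ hN]
  exact dvd_sum fun n hn => (hD n (mem_Ico.mp hn).1).mul_right _

end diagonalSum

def speckerWeight (b : ℕ → ℤ) (n : ℕ) : ℤ :=
  ∏ i ∈ range n, (2 * |b i| + 2)

section speckerWeight

variable (b : ℕ → ℤ)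

theorem speckerWeight_succ (n : ℕ) :
    speckerWeight b (n + 1) = speckerWeight b n * (2 * |b n| + 2) :=
  prod_range_succ _ _

theorem two_pow_le_speckerWeight (n : ℕ) : 2 ^ n ≤ speckerWeight b n :=
  calc (2 : ℤ) ^ n = ∏ _i ∈ range n, (2 : ℤ) := by simp
    _ ≤ speckerWeight b n :=
      prod_le_prod (fun _ _ => zero_le_two) fun i _ => by linarith [abs_nonneg (b i)]

theorem speckerWeight_pos (n : ℕ) : 0 < speckerWeight b n :=
  lt_of_lt_of_le (pow_pos two_pos n) (two_pow_le_speckerWeight b n)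

theorem speckerWeight_dvd {N n : ℕ} (h : N ≤ n) : speckerWeight b N ∣ speckerWeight b n :=
  prod_dvd_prod_of_subset _ _ _ (range_subset_range.mpr h)

theorem two_mul_abs_sum_lt_speckerWeight (N : ℕ) :
    2 * |∑ n ∈ range N, speckerWeight b n * b n| < speckerWeight b N := by
  induction N with
  | zero => simp [speckerWeight]
  | succ N ih =>
    have hpos := speckerWeight_pos b N
    have hstep : |∑ n ∈ range (N + 1), speckerWeight b n * b n|
        ≤ |∑ n ∈ range N, speckerWeight b n * b n| + speckerWeight b N * |b N| := by
      rw [sum_range_succ]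
      calc _ ≤ _ + |speckerWeight b N * b N| := abs_add_le _ _
        _ = _ := by rw [abs_mul, abs_of_pos hpos]
    rw [speckerWeight_succ]
    linarith

end speckerWeight

theorem exists_forall_lt_eq_zero_imp_map_eq_zero (β : (ℕ → ℤ) →+ ℤ) :
    ∃ j : ℕ, ∀ m : ℕ → ℤ, (∀ k < j, m k = 0) → β m = 0 := by
  by_contra! h
  choose m hm0 hmne using h
  set b : ℕ → ℤ := fun n => β (m n)
  set W := speckerWeight b
  set s : ℕ → ℤ := fun N => ∑ n ∈ range N, W n * b n
  set a := β (diagonalSum W m)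
  obtain ⟨N, hN⟩ := pow_unbounded_of_one_lt (2 * |a|) one_lt_two
  have ha_eq : ∀ M, N ≤ M → a = s M := fun M hM =>
    Int.eq_of_dvd_sub_of_two_mul_abs_lt
      (dvd_map_diagonalSum_sub β hm0 fun n => speckerWeight_dvd b)
      (hN.trans_le ((pow_le_pow_right₀ one_le_two hM).trans (two_pow_le_speckerWeight b M)))
      (two_mul_abs_sum_lt_speckerWeight b M)
  have hs_succ : s (N + 1) = s N + W N * b N := sum_range_succ _ _
  have hWb : W N * b N = 0 := by linarith [ha_eq N le_rfl, ha_eq (N + 1) N.le_succ]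
  exact hmne N ((mul_eq_zero.mp hWb).resolve_left (speckerWeight_pos b N).ne')

/-- Every additive group homomorphism `ℤ^ω → ℤ` kills all sequences vanishing in
the first `j` coordinates, for some `j`; equivalently it is continuous for the
product topology on `ℕ → ℤ` (`ℤ` discrete). -/
theorem zomega_to_int_continuous (β : (ℕ → ℤ) →+ ℤ) :
    (∃ j : ℕ, ∀ m : ℕ → ℤ, (∀ k < j, m k = 0) → β m = 0) ∧ Continuous β := by
  obtain ⟨j, hj⟩ := exists_forall_lt_eq_zero_imp_map_eq_zero β
  refine ⟨⟨j, hj⟩, β.continuous_of_forall_mem_eq_zero_imp_map_eq_zero (range j) fun m hm => ?_⟩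
  exact hj m fun k hk => hm k (mem_range.mpr hk)
end

section
/- Let M be a commutative monoid (written additively) with a descending sequence of congruences c₁ ≥ c₂ ≥ … such that: (i) the canonical map from M to the projective limit { y ∈ ∏ i, M/c_i | compatible under the natural maps M/c_{i+1} → M/c_i } is bijective; and (ii) for each i the quotient monoid M/c_i is finitely generated and admits an injective monoid homomorphism into the additive group Fin k_i → ℤ for some k_i ∈ ℕ. Then there exists an injective monoid homomorphism ι : M → (ℕ → ℤ) (pointwise addition) such that the image ι(M) is closed in the product topology on ℕ → ℤ (ℤ discrete) and, for every i, the image of ι(M) under the projection to the first i coordinates is a finitely generated submonoid of Fin i → ℤ. -/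
section Aux
variable {M : Type*} [AddCommMonoid M] (c : ℕ → AddCon M) (k : ℕ → ℕ)
  (φ : ∀ i, (c i).Quotient →+ (Fin (k i) → ℤ))

/-- The candidate embedding `M →+ ℤ^ω`, placing the `i`-th quotient's data at
coordinates `Nat.pair i j`, `j < k i`. -/
def iotaF : M →+ (ℕ → ℤ) where
  toFun m n :=
    if h : (Nat.unpair n).2 < k (Nat.unpair n).1 then
      φ (Nat.unpair n).1 (m : (c (Nat.unpair n).1).Quotient) ⟨(Nat.unpair n).2, h⟩
    else 0
  map_zero' := by
    funext n
    by_cases h : (Nat.unpair n).2 < k (Nat.unpair n).1 <;> simp [h]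
  map_add' a b := by
    funext n; dsimp only [Pi.add_apply]
    by_cases h : (Nat.unpair n).2 < k (Nat.unpair n).1 <;> simp [h]

lemma iotaF_eq (m : M) (n i : ℕ) (j : Fin (k i)) (h1 : (Nat.unpair n).1 = i)
    (h2 : (Nat.unpair n).2 = j.1) :
    iotaF c k φ m n = φ i (m : (c i).Quotient) j := by
  obtain ⟨jv, hj⟩ := j
  subst h1
  dsimp only at h2
  subst h2
  show dite _ _ _ = _
  rw [dif_pos hj]

lemma iotaF_pair (m : M) (i : ℕ) (j : Fin (k i)) :
    iotaF c k φ m (Nat.pair i j) = φ i (m : (c i).Quotient) j :=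
  iotaF_eq c k φ m _ i j (by rw [Nat.unpair_pair]) (by rw [Nat.unpair_pair])

lemma iotaF_invalid (m : M) (n : ℕ) (h : ¬ (Nat.unpair n).2 < k (Nat.unpair n).1) :
    iotaF c k φ m n = 0 := by
  simp only [iotaF, AddMonoidHom.coe_mk, ZeroHom.coe_mk, h, dif_neg, not_false_iff]

lemma cleAux (hd : ∀ i, c (i + 1) ≤ c i) : ∀ {a b : ℕ}, a ≤ b → c b ≤ c a := by
  intro a b h
  induction h with
  | refl => exact le_refl _
  | step _ ih => exact le_trans (hd _) ih

/-- Factorization of `projZ i ∘ iotaF` through the quotient by `c i`. -/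
def thetaF (hd : ∀ i, c (i + 1) ≤ c i) (i : ℕ) : (c i).Quotient →+ (Fin i → ℤ) where
  toFun q n :=
    if h : (Nat.unpair n.1).2 < k (Nat.unpair n.1).1 then
      φ (Nat.unpair n.1).1
        (AddCon.map (c i) (c (Nat.unpair n.1).1)
          (cleAux c hd (le_of_lt (lt_of_le_of_lt (Nat.unpair_left_le n.1) n.2))) q)
        ⟨(Nat.unpair n.1).2, h⟩
    else 0
  map_zero' := by
    funext n
    by_cases h : (Nat.unpair n.1).2 < k (Nat.unpair n.1).1 <;> simp [h]
  map_add' a b := by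
    funext n; dsimp only [Pi.add_apply]
    by_cases h : (Nat.unpair n.1).2 < k (Nat.unpair n.1).1 <;> simp [h]

end Aux

/-- Projection of `ℤ^ω = ℕ → ℤ` onto the first `i` coordinates. -/
def projZ (i : ℕ) : (ℕ → ℤ) →+ (Fin i → ℤ) where
  toFun m := fun k => m k.1
  map_zero' := rfl
  map_add' _ _ := rfl

/-- A pro-affine semigroup (a commutative monoid, complete and Hausdorff for a
descending filtration of congruences whose quotients are affine semigroups) embeds
into `ℤ^ω` as a closed submonoid whose projection to the first `i` coordinates is
finitely generated for every `i`. -/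
theorem proaffine_embeds_in_zomega
    {M : Type*} [AddCommMonoid M]
    (c : ℕ → AddCon M) (hdesc : ∀ i, c (i + 1) ≤ c i)
    (hbij : Function.Injective
        (fun m : M => (fun i => (m : (c i).Quotient) : ∀ i, (c i).Quotient)) ∧
      Set.range (fun m : M => (fun i => (m : (c i).Quotient) : ∀ i, (c i).Quotient)) =
        { y : ∀ i, (c i).Quotient |
          ∀ i, AddCon.map (c (i + 1)) (c i) (hdesc i) (y (i + 1)) = y i })
    (hFG : ∀ i, AddMonoid.FG (c i).Quotient)
    (hemb : ∀ i, ∃ k : ℕ, ∃ φ : (c i).Quotient →+ (Fin k → ℤ), Function.Injective φ) :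
    ∃ ι : M →+ (ℕ → ℤ), Function.Injective ι ∧
      IsClosed (Set.range ι) ∧
      ∀ i : ℕ, AddSubmonoid.FG (AddMonoidHom.mrange ((projZ i).comp ι)) := by
  classical
  choose k φ hφ using hemb
  refine ⟨iotaF c k φ, ?_, ?_, ?_⟩
  · -- injectivity
    intro a b hab
    refine hbij.1 (funext fun i => hφ i (funext fun j => ?_))
    have := congrFun hab (Nat.pair i j)
    rwa [iotaF_pair, iotaF_pair] at this
  · -- closedness
    have hrange : Set.range (iotaF c k φ) =
        (⋂ i : ℕ, {x : ℕ → ℤ | ∃ q : (c (i + 1)).Quotient,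
            (fun j : Fin (k (i + 1)) => x (Nat.pair (i + 1) j)) = φ (i + 1) q ∧
            (fun j : Fin (k i) => x (Nat.pair i j)) =
              φ i (AddCon.map (c (i + 1)) (c i) (hdesc i) q)}) ∩
        {x : ℕ → ℤ | ∀ n : ℕ, ¬ (Nat.unpair n).2 < k (Nat.unpair n).1 → x n = 0} := by
      ext x
      constructor
      · rintro ⟨m, rfl⟩
        refine ⟨Set.mem_iInter.2 fun i =>
          ⟨(m : (c (i + 1)).Quotient), funext fun j => ?_, funext fun j => ?_⟩,
          fun n hn => iotaF_invalid c k φ m n hn⟩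
        · exact iotaF_pair c k φ m (i + 1) j
        · exact iotaF_pair c k φ m i j
      · rintro ⟨h1, h2⟩
        choose q hq1 hq2 using Set.mem_iInter.1 h1
        set y : ∀ i, (c i).Quotient := fun i =>
          match i with
          | 0 => AddCon.map (c 1) (c 0) (hdesc 0) (q 0)
          | (i + 1) => q i with hy
        have hymem : y ∈ { z : ∀ i, (c i).Quotient |
            ∀ i, AddCon.map (c (i + 1)) (c i) (hdesc i) (z (i + 1)) = z i } := by
          intro i
          match i with
          | 0 => rfl
          | (i + 1) => exact hφ (i + 1) ((hq2 (i + 1)).symm.trans (hq1 i))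
        rw [← hbij.2] at hymem
        obtain ⟨m, hm⟩ := hymem
        have hmy : ∀ i, (m : (c i).Quotient) = y i := fun i => congrFun hm i
        have hyx : ∀ i, φ i (y i) = fun j : Fin (k i) => x (Nat.pair i j) := by
          intro i
          match i with
          | 0 => exact (hq2 0).symm
          | (i + 1) => exact (hq1 i).symm
        refine ⟨m, funext fun n => ?_⟩
        by_cases h : (Nat.unpair n).2 < k (Nat.unpair n).1
        · have e1 : iotaF c k φ m n =
              φ (Nat.unpair n).1 (m : (c (Nat.unpair n).1).Quotient) ⟨(Nat.unpair n).2, h⟩ :=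
            iotaF_eq c k φ m n _ ⟨(Nat.unpair n).2, h⟩ rfl rfl
          rw [e1, hmy, congrFun (hyx (Nat.unpair n).1) ⟨(Nat.unpair n).2, h⟩]
          show x (Nat.pair (Nat.unpair n).1 (Nat.unpair n).2) = x n
          rw [Nat.pair_unpair]
        · rw [iotaF_invalid c k φ m n h, h2 n h]
    rw [hrange]
    refine IsClosed.inter (isClosed_iInter fun i => ?_) ?_
    · have : {x : ℕ → ℤ | ∃ q : (c (i + 1)).Quotient,
          (fun j : Fin (k (i + 1)) => x (Nat.pair (i + 1) j)) = φ (i + 1) q ∧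
          (fun j : Fin (k i) => x (Nat.pair i j)) =
            φ i (AddCon.map (c (i + 1)) (c i) (hdesc i) q)} =
          (fun x : ℕ → ℤ => ((fun j : Fin (k (i + 1)) => x (Nat.pair (i + 1) j)),
              (fun j : Fin (k i) => x (Nat.pair i j)))) ⁻¹'
            {p : (Fin (k (i + 1)) → ℤ) × (Fin (k i) → ℤ) | ∃ q : (c (i + 1)).Quotient,
              p.1 = φ (i + 1) q ∧ p.2 = φ i (AddCon.map (c (i + 1)) (c i) (hdesc i) q)} := rfl
      rw [this]
      exact IsClosed.preimage
        ((continuous_pi fun j => continuous_apply _).prodMk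
          (continuous_pi fun j => continuous_apply _))
        (isClosed_discrete _)
    · have : {x : ℕ → ℤ | ∀ n : ℕ, ¬ (Nat.unpair n).2 < k (Nat.unpair n).1 → x n = 0} =
          ⋂ n ∈ {n : ℕ | ¬ (Nat.unpair n).2 < k (Nat.unpair n).1},
            (fun x : ℕ → ℤ => x n) ⁻¹' {0} := by
        ext x; simp [Set.mem_iInter]
      rw [this]
      exact isClosed_biInter fun n _ =>
        IsClosed.preimage (continuous_apply n) isClosed_singleton
  · -- finite generation of projections
    intro i
    have h1 : (projZ i).comp (iotaF c k φ) =
        (thetaF c k φ hdesc i).comp (AddCon.mk' (c i)) := rfl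
    rw [h1, AddMonoidHom.mrange_comp,
      AddMonoidHom.mrange_eq_top.2 AddCon.mk'_surjective]
    exact (AddMonoid.fg_def.mp (hFG i)).map _
end

section
/- Let S and S' be submonoids of the additive monoid ℕ → ℤ (pointwise addition), each endowed with the subspace topology from the product topology on ℕ → ℤ where ℤ is discrete. Assume that the subgroup of ℕ → ℤ generated by S is all of ℕ → ℤ. Then every monoid homomorphism β : S → S' is continuous. -/
/-!
Since `S` is cancellative and generates `ℤ^ℕ`, the group `ℤ^ℕ` is the Grothendieck group of `S`,
so `β` extends to a group homomorphism `ℤ^ℕ → ℤ^ℕ`, and it suffices that every homomorphism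
`φ : ℤ^ℕ → ℤ` is continuous (Specker), i.e. kills all sequences vanishing below some `N`.
Otherwise pick `x j` vanishing below `j` with `φ (x j) ≠ 0`, and scales `d 0 ∣ d 1 ∣ ⋯` growing
fast. The pointwise finite sum `y = ∑ d j • x j` satisfies
`φ y ≡ ∑_{j ≤ i} d j * φ (x j) [ZMOD d (i + 1)]` for every `i`; by the growth of `d` this forces
`φ y` to equal these partial sums for all large `i`, which is absurd since consecutive ones differ
by `d (i + 1) * φ (x (i + 1)) ≠ 0`.
-/

open Finset

section Extension

variable {G H : Type*} [AddCommGroup G] [AddCommGroup H]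

theorem AddSubmonoid.exists_sub_eq_of_closure_eq_top {S : AddSubmonoid G}
    (hS : AddSubgroup.closure (S : Set G) = ⊤) (g : G) : ∃ a ∈ S, ∃ b ∈ S, g = a - b := by
  have hg : g ∈ AddSubgroup.closure (S : Set G) := hS ▸ AddSubgroup.mem_top g
  induction hg using AddSubgroup.closure_induction with
  | mem g hg => exact ⟨g, hg, 0, S.zero_mem, (sub_zero g).symm⟩
  | zero => exact ⟨0, S.zero_mem, 0, S.zero_mem, (sub_zero 0).symm⟩
  | add _ _ _ _ hg hh =>
    obtain ⟨a, ha, b, hb, rfl⟩ := hg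
    obtain ⟨c, hc, e, he, rfl⟩ := hh
    exact ⟨a + c, S.add_mem ha hc, b + e, S.add_mem hb he, by abel⟩
  | neg _ _ hg =>
    obtain ⟨a, ha, b, hb, rfl⟩ := hg
    exact ⟨b, hb, a, ha, neg_sub a b⟩

theorem AddMonoidHom.exists_comp_subtype_eq_of_closure_eq_top {S : AddSubmonoid G}
    (hS : AddSubgroup.closure (S : Set G) = ⊤) (f : S →+ H) :
    ∃ F : G →+ H, F.comp S.subtype = f := by
  have hloc : (⊤ : AddSubmonoid S).IsLocalizationMap S.subtype :=
    AddSubmonoid.isLocalizationMap_of_addGroup Subtype.val_injective fun g => by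
      obtain ⟨a, ha, b, hb, rfl⟩ := S.exists_sub_eq_of_closure_eq_top hS g
      exact ⟨⟨a, ha⟩, ⟨b, hb⟩, trivial, rfl⟩
  let ι : (⊤ : AddSubmonoid S).LocalizationMap G := ⟨S.subtype.toAddHom, hloc⟩
  exact ⟨ι.lift (g := f) fun _ => AddGroup.isAddUnit _, ι.lift_comp _⟩

end Extension

namespace Specker

/-- The pairs `(d i, s i)` of the proof idea, for `a j = φ (x j)`. -/
def scaledSums (a : ℕ → ℤ) : ℕ → ℤ × ℤ
  | 0 => (1, a 0)
  | i + 1 =>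
    let d := (scaledSums a i).1 * (2 * (|(scaledSums a i).2| + 1))
    (d, (scaledSums a i).2 + d * a (i + 1))

variable (a : ℕ → ℤ)

theorem scaledSums_fst_succ (i : ℕ) :
    (scaledSums a (i + 1)).1 = (scaledSums a i).1 * (2 * (|(scaledSums a i).2| + 1)) := rfl

theorem scaledSums_snd_succ (i : ℕ) :
    (scaledSums a (i + 1)).2 = (scaledSums a i).2 + (scaledSums a (i + 1)).1 * a (i + 1) := rfl

theorem scaledSums_fst_pos (i : ℕ) : 0 < (scaledSums a i).1 := by
  induction i with
  | zero => exact one_pos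
  | succ i ih => rw [scaledSums_fst_succ]; positivity

theorem scaledSums_fst_dvd {i j : ℕ} (hij : i ≤ j) : (scaledSums a i).1 ∣ (scaledSums a j).1 :=
  Nat.rel_of_forall_rel_succ_of_le (· ∣ ·) (fun k => Dvd.intro _ (scaledSums_fst_succ a k).symm)
    hij

theorem two_mul_abs_scaledSums_snd_lt (i : ℕ) :
    2 * |(scaledSums a i).2| < (scaledSums a (i + 1)).1 := by
  rw [scaledSums_fst_succ]
  nlinarith [scaledSums_fst_pos a i, abs_nonneg (scaledSums a i).2]

theorem lt_scaledSums_fst (i : ℕ) : (i : ℤ) < (scaledSums a i).1 := by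
  induction i with
  | zero => exact one_pos
  | succ i ih =>
    rw [scaledSums_fst_succ]
    push_cast
    nlinarith [abs_nonneg (scaledSums a i).2]

theorem scaledSums_snd_eq_sum (i : ℕ) :
    (scaledSums a i).2 = ∑ j ∈ range (i + 1), (scaledSums a j).1 * a j := by
  induction i with
  | zero => simp [scaledSums]
  | succ i ih => rw [sum_range_succ, ← ih, scaledSums_snd_succ]

theorem eq_scaledSums_snd_of_dvd {m : ℤ} {i : ℕ}
    (hdvd : (scaledSums a (i + 1)).1 ∣ m - (scaledSums a i).2) (hm : 2 * |m| ≤ i) :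
    m = (scaledSums a i).2 := by
  have hlt : |m - (scaledSums a i).2| < (scaledSums a (i + 1)).1 := by
    have := two_mul_abs_scaledSums_snd_lt a i
    have := lt_scaledSums_fst a (i + 1)
    have := abs_sub m (scaledSums a i).2
    push_cast at *
    linarith
  exact sub_eq_zero.mp (Int.eq_zero_of_abs_lt_dvd hdvd hlt)

end Specker

namespace AddMonoidHom

theorem dvd_apply_of_forall_dvd {ι : Type*} (φ : (ι → ℤ) →+ ℤ) {d : ℤ} {v : ι → ℤ}
    (hv : ∀ i, d ∣ v i) : d ∣ φ v := by
  have hv_eq : v = d • fun i => v i / d := funext fun i => (Int.mul_ediv_cancel' (hv i)).symm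
  rw [hv_eq, map_zsmul, smul_eq_mul]
  exact dvd_mul_right _ _

theorem dvd_apply_sub_sum_of_dvd (φ : (ℕ → ℤ) →+ ℤ) {x : ℕ → ℕ → ℤ}
    (hx : ∀ j n, n < j → x j n = 0) {c : ℕ → ℤ} {d : ℤ} {i : ℕ} (hc : ∀ j, i < j → d ∣ c j) :
    d ∣ φ (fun n => ∑ j ∈ Finset.range (n + 1), c j * x j n) -
      ∑ j ∈ Finset.range (i + 1), c j * φ (x j) := by
  simp only [← smul_eq_mul, ← map_zsmul, ← map_sum, ← map_sub]
  refine φ.dvd_apply_of_forall_dvd fun n => ?_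
  have hext : ∑ j ∈ Finset.range (n + 1), c j * x j n =
      ∑ j ∈ Finset.range (n + i + 1), c j * x j n :=
    sum_subset (Finset.range_subset_range.2 (by omega)) fun j _ hj => by
      rw [hx j n (by simpa using hj), mul_zero]
  simp only [Pi.sub_apply, Finset.sum_apply, Pi.smul_apply, smul_eq_mul, hext]
  rw [← sum_Ico_eq_sub _ (by omega : i + 1 ≤ n + i + 1)]
  exact dvd_sum fun j hj => (hc j (mem_Ico.1 hj).1).mul_right _

theorem exists_apply_eq_zero_of_forall_lt_eq_zero (φ : (ℕ → ℤ) →+ ℤ) :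
    ∃ N, ∀ v : ℕ → ℤ, (∀ k < N, v k = 0) → φ v = 0 := by
  by_contra! h
  choose x hx hφx using h
  set p := Specker.scaledSums fun j => φ (x j)
  set m := φ fun n => ∑ j ∈ Finset.range (n + 1), (p j).1 * x j n
  have hm (i : ℕ) (hi : 2 * |m| ≤ i) : m = (p i).2 := by
    refine Specker.eq_scaledSums_snd_of_dvd _ ?_ hi
    rw [Specker.scaledSums_snd_eq_sum]
    exact φ.dvd_apply_sub_sum_of_dvd hx fun j hj => Specker.scaledSums_fst_dvd _ hj
  set i := (2 * |m|).toNat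
  have hi : 2 * |m| ≤ i := Int.self_le_toNat _
  have hsucc : (p (i + 1)).2 = (p i).2 := (hm (i + 1) (by push_cast; omega)).symm.trans (hm i hi)
  rw [Specker.scaledSums_snd_succ, add_eq_left] at hsucc
  exact mul_ne_zero (Specker.scaledSums_fst_pos _ _).ne' (hφx _) hsucc

theorem continuous_of_pi_nat_int (φ : (ℕ → ℤ) →+ ℤ) : Continuous φ := by
  obtain ⟨N, hN⟩ := φ.exists_apply_eq_zero_of_forall_lt_eq_zero
  have hU : IsOpen ((Set.Iio N).pi fun _ => ({0} : Set ℤ)) :=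
    isOpen_set_pi (Set.finite_Iio N) fun _ _ => isOpen_discrete _
  refine continuous_of_continuousAt_zero φ ?_
  rw [ContinuousAt, nhds_discrete ℤ, Filter.tendsto_pure]
  filter_upwards [hU.mem_nhds fun _ _ => rfl] with v hv
  rw [map_zero]
  exact hN v hv

theorem continuous_pi_of_pi_nat_int {ι : Type*} (F : (ℕ → ℤ) →+ (ι → ℤ)) : Continuous F :=
  continuous_pi fun i => ((Pi.evalAddMonoidHom _ i).comp F).continuous_of_pi_nat_int

end AddMonoidHom

/-- Any monoid homomorphism between submonoids of `ℤ^ω = ℕ → ℤ` (with the subspace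
topology from the product topology, `ℤ` discrete) is automatically continuous,
provided the source generates `ℤ^ω` as a group. -/
theorem submonoid_hom_continuous
    (S S' : AddSubmonoid (ℕ → ℤ))
    (hgen : AddSubgroup.closure (S : Set (ℕ → ℤ)) = ⊤)
    (β : S →+ S') :
    Continuous β := by
  obtain ⟨F, hF⟩ := (S'.subtype.comp β).exists_comp_subtype_eq_of_closure_eq_top hgen
  have hβ : Subtype.val ∘ β = F ∘ Subtype.val := funext fun s => (DFunLike.congr_fun hF s).symm
  rw [continuous_induced_rng, hβ]
  exact F.continuous_pi_of_pi_nat_int.comp continuous_subtype_val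
end

section
/- Let e₀ ∈ (ℕ → ℤ) be the sequence with e₀ 0 = 1 and e₀ i = 0 for i ≥ 1, and let S = { m : ℕ → ℤ | ∀ i, 0 ≤ m i } \ {e₀}. Then S is a submonoid of the additive monoid ℕ → ℤ (it contains 0 and is closed under pointwise addition), but S is not closed in the product topology on ℕ → ℤ (ℤ discrete); indeed e₀ belongs to the closure of S, being the limit of the sequence (e₀ + e_i)_{i ≥ 1} where e_i is the i-th standard basis sequence. -/
open Filter Topology

/-- The `i`-th standard basis sequence in `ℤ^ω = ℕ → ℤ`. -/
def stdSeq (i : ℕ) : ℕ → ℤ := fun j => if j = i then 1 else 0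

/-- The set `S = ℤ^ω_{≥0} \ {e₀}` is a submonoid of `ℤ^ω` (contains `0`, closed
under addition) which is not closed in the product topology: `e₀` lies in the
closure of `S`, being the limit of the sequence `(e₀ + eᵢ)_{i ≥ 1}` of elements
of `S`. Hence `S` is not a pro-affine semigroup. -/
theorem nonneg_minus_e0_not_closed :
    (0 : ℕ → ℤ) ∈ ({m : ℕ → ℤ | ∀ i, 0 ≤ m i} \ {stdSeq 0}) ∧
      (∀ a ∈ ({m : ℕ → ℤ | ∀ i, 0 ≤ m i} \ {stdSeq 0}),
        ∀ b ∈ ({m : ℕ → ℤ | ∀ i, 0 ≤ m i} \ {stdSeq 0}),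
          a + b ∈ ({m : ℕ → ℤ | ∀ i, 0 ≤ m i} \ {stdSeq 0})) ∧
      (∀ n : ℕ, stdSeq 0 + stdSeq (n + 1) ∈
        ({m : ℕ → ℤ | ∀ i, 0 ≤ m i} \ {stdSeq 0})) ∧
      Tendsto (fun n : ℕ => stdSeq 0 + stdSeq (n + 1)) atTop (𝓝 (stdSeq 0)) ∧
      stdSeq 0 ∈ closure ({m : ℕ → ℤ | ∀ i, 0 ≤ m i} \ {stdSeq 0}) ∧
      ¬ IsClosed ({m : ℕ → ℤ | ∀ i, 0 ≤ m i} \ {stdSeq 0}) := by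
  have hS0 : (0 : ℕ → ℤ) ∈ ({m : ℕ → ℤ | ∀ i, 0 ≤ m i} \ {stdSeq 0}) := by
    refine ⟨fun i => le_refl 0, fun h => ?_⟩
    have := congrFun h 0
    simp [stdSeq] at this
  have hadd : ∀ a ∈ ({m : ℕ → ℤ | ∀ i, 0 ≤ m i} \ {stdSeq 0}),
      ∀ b ∈ ({m : ℕ → ℤ | ∀ i, 0 ≤ m i} \ {stdSeq 0}),
        a + b ∈ ({m : ℕ → ℤ | ∀ i, 0 ≤ m i} \ {stdSeq 0}) := by
    rintro a ⟨ha, ha'⟩ b ⟨hb, hb'⟩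
    refine ⟨fun i => add_nonneg (ha i) (hb i), fun h => ?_⟩
    have h' : ∀ j, a j + b j = stdSeq 0 j := fun j => congrFun h j
    have hj : ∀ j, j ≠ 0 → a j = 0 ∧ b j = 0 := by
      intro j hjne
      have h1 := h' j
      have h2 := ha j
      have h3 := hb j
      simp only [Pi.add_apply, stdSeq, if_neg hjne] at h1
      omega
    have h0 := h' 0
    simp [stdSeq] at h0
    have h2 := ha 0
    have h3 := hb 0
    rcases (show a 0 = 1 ∧ b 0 = 0 ∨ a 0 = 0 ∧ b 0 = 1 by omega) with ⟨ha0, _⟩ | ⟨_, hb0⟩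
    · exact ha' (funext fun j => by
        rcases eq_or_ne j 0 with rfl | hjne
        · simpa [stdSeq] using ha0
        · simp [stdSeq, hjne, (hj j hjne).1])
    · exact hb' (funext fun j => by
        rcases eq_or_ne j 0 with rfl | hjne
        · simpa [stdSeq] using hb0
        · simp [stdSeq, hjne, (hj j hjne).2])
  have hmem : ∀ n : ℕ, stdSeq 0 + stdSeq (n + 1) ∈
      ({m : ℕ → ℤ | ∀ i, 0 ≤ m i} \ {stdSeq 0}) := by
    intro n
    refine ⟨fun i => ?_, fun h => ?_⟩
    · simp only [Pi.add_apply, stdSeq]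
      split <;> split <;> omega
    · have := congrFun h (n + 1)
      simp [stdSeq] at this
  have htend : Tendsto (fun n : ℕ => stdSeq 0 + stdSeq (n + 1)) atTop (𝓝 (stdSeq 0)) := by
    rw [tendsto_pi_nhds]
    intro j
    have : ∀ᶠ n : ℕ in atTop, stdSeq 0 j = (stdSeq 0 + stdSeq (n + 1)) j := by
      filter_upwards [eventually_ge_atTop j] with n hn
      have : j ≠ n + 1 := by omega
      simp [stdSeq, this]
    exact Tendsto.congr' this tendsto_const_nhds
  have hcl : stdSeq 0 ∈ closure ({m : ℕ → ℤ | ∀ i, 0 ≤ m i} \ {stdSeq 0}) :=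
    mem_closure_of_tendsto htend (Eventually.of_forall hmem)
  refine ⟨hS0, hadd, hmem, htend, hcl, fun hclosed => ?_⟩
  have := hclosed.closure_subset hcl
  exact this.2 rfl
end

section
/- Let 𝒮 = { m : ℕ → ℤ | 0 ≤ m 0 ∧ ∀ j ≥ 1, 0 ≤ m 0 + 2 * m j }. Then: (a) 𝒮 is a submonoid of the additive monoid ℕ → ℤ with pointwise addition; (b) 𝒮 is closed in the product topology on ℕ → ℤ (ℤ discrete); and (c) for every i ≥ 1, the image of 𝒮 under the projection π_i to the first i coordinates equals S_i = { m : Fin i → ℤ | 0 ≤ m 0 ∧ ∀ j ≠ 0, 0 ≤ m 0 + 2 * m j }, and S_i is a finitely generated submonoid of Fin i → ℤ. In particular 𝒮 is a pro-affine semigroup. -/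
/-!
Closedness and the description of the projections are immediate: the defining inequalities
involve two coordinates at a time, and a point of `Sᵢ` extends by zero to a point of `𝒮`.
For finite generation, with `z` the distinguished coordinate, an element `m` with `m z ≥ 2`
stays in the semigroup after subtracting `2 e_z - ∑_{m j < 0} e_j`, which lowers `m z` by `2`;
once `m z ≤ 1` all coordinates are nonnegative, so `m` is a sum of unit vectors. Hence the
finitely many elements of the semigroup with coordinates in `[-1, 2]` generate it.
-/

variable {ι : Type*}

/-- The semigroup of the toric variety `y² = ∏_{j ≠ z} x_j`, the coordinate `z` playing the
role of `y`. -/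
def toricSemigroup (z : ι) : AddSubmonoid (ι → ℤ) where
  carrier := {m | 0 ≤ m z ∧ ∀ j, j ≠ z → 0 ≤ m z + 2 * m j}
  add_mem' := by
    rintro a b ⟨ha, ha'⟩ ⟨hb, hb'⟩
    refine ⟨add_nonneg ha hb, fun j hj => ?_⟩
    simp only [Pi.add_apply]
    linarith [ha' j hj, hb' j hj]
  zero_mem' := ⟨le_rfl, fun _ _ => by simp⟩

theorem mem_toricSemigroup {z : ι} {m : ι → ℤ} :
    m ∈ toricSemigroup z ↔ 0 ≤ m z ∧ ∀ j, j ≠ z → 0 ≤ m z + 2 * m j :=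
  Iff.rfl

theorem isClosed_toricSemigroup (z : ι) : IsClosed (toricSemigroup z : Set (ι → ℤ)) := by
  have hcoe : (toricSemigroup z : Set (ι → ℤ)) =
      {m | 0 ≤ m z} ∩ ⋂ j, ⋂ (_ : j ≠ z), {m | 0 ≤ m z + 2 * m j} := by
    ext m
    simp [mem_toricSemigroup]
  rw [hcoe]
  exact (isClosed_le continuous_const (continuous_apply z)).inter <|
    isClosed_iInter fun j => isClosed_iInter fun _ => isClosed_le continuous_const (by fun_prop)

theorem image_comp_toricSemigroup {κ : Type*} {f : κ → ι} (hf : f.Injective) (z : κ) :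
    (fun m : ι → ℤ => m ∘ f) '' toricSemigroup (f z) = toricSemigroup z := by
  ext m
  constructor
  · rintro ⟨m, ⟨h0, h⟩, rfl⟩
    exact ⟨h0, fun j hj => h (f j) (hf.ne hj)⟩
  · rintro ⟨h0, h⟩
    refine ⟨Function.extend f m 0, ⟨by rwa [hf.extend_apply], fun j hj => ?_⟩,
      Function.extend_comp hf m 0⟩
    rw [hf.extend_apply]
    by_cases hj' : ∃ k, f k = j
    · obtain ⟨k, rfl⟩ := hj'
      rw [hf.extend_apply]
      exact h k (ne_of_apply_ne f hj)
    · simpa [Function.extend_apply' _ _ _ hj'] using h0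

theorem Pi.mem_closure_range_single_one_of_nonneg [Fintype ι] [DecidableEq ι] {m : ι → ℤ}
    (hm : 0 ≤ m) : m ∈ AddSubmonoid.closure (Set.range fun j => (Pi.single j 1 : ι → ℤ)) := by
  rw [← Finset.univ_sum_single m]
  refine sum_mem fun j _ => ?_
  have hsingle : Pi.single j (m j) = (m j).toNat • (Pi.single j 1 : ι → ℤ) := by
    rw [← Pi.single_smul, nsmul_one, Int.toNat_of_nonneg (hm j)]
  rw [hsingle]
  exact nsmul_mem (AddSubmonoid.subset_closure (Set.mem_range_self j)) _

theorem nonneg_of_mem_toricSemigroup {z : ι} {m : ι → ℤ} (hm : m ∈ toricSemigroup z)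
    (hz : m z < 2) : 0 ≤ m := by
  intro j
  by_cases hj : j = z
  · exact hj ▸ hm.1
  · have := hm.2 j hj
    simp only [Pi.zero_apply]
    omega

section FiniteGeneration

variable [DecidableEq ι]

/-- `2 e_z - ∑_{j ≠ z, m j < 0} e_j`. -/
def descentGenerator (z : ι) (m : ι → ℤ) : ι → ℤ :=
  fun k => if k = z then 2 else if m k < 0 then -1 else 0

theorem sub_descentGenerator_mem_toricSemigroup {z : ι} {m : ι → ℤ}
    (hm : m ∈ toricSemigroup z) (hz : 2 ≤ m z) :
    m - descentGenerator z m ∈ toricSemigroup z := by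
  refine ⟨by simpa [descentGenerator] using hz, fun j hj => ?_⟩
  have := hm.2 j hj
  simp only [descentGenerator, Pi.sub_apply, if_pos, hj, if_false]
  split_ifs <;> omega

def toricGenerators (z : ι) : Set (ι → ℤ) :=
  (toricSemigroup z : Set (ι → ℤ)) ∩ Set.Icc (-1) 2

theorem descentGenerator_mem_toricGenerators (z : ι) (m : ι → ℤ) :
    descentGenerator z m ∈ toricGenerators z := by
  refine ⟨⟨by simp [descentGenerator], fun j hj => ?_⟩, fun k => ?_, fun k => ?_⟩
  · simp only [descentGenerator, hj, if_true, if_false]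
    split_ifs <;> norm_num
  all_goals
    simp only [descentGenerator, Pi.neg_apply, Pi.ofNat_apply]
    split_ifs <;> norm_num

theorem single_one_mem_toricGenerators (z j : ι) :
    Pi.single j (1 : ℤ) ∈ toricGenerators z := by
  refine ⟨⟨?_, fun k hk => ?_⟩, fun k => ?_, fun k => ?_⟩ <;>
    simp only [Pi.single_apply, Pi.neg_apply, Pi.ofNat_apply] <;>
    split_ifs <;> norm_num

theorem closure_toricGenerators [Fintype ι] (z : ι) :
    AddSubmonoid.closure (toricGenerators z) = toricSemigroup z := by
  refine le_antisymm (AddSubmonoid.closure_le.2 Set.inter_subset_left) fun m hm => ?_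
  obtain ⟨n, hn⟩ : ∃ n : ℕ, m z < 2 * n := ⟨(m z).toNat + 1, by omega⟩
  induction n generalizing m with
  | zero => exact absurd hm.1 (by omega)
  | succ n ih =>
    by_cases h2 : m z < 2
    · refine AddSubmonoid.closure_mono ?_
        (Pi.mem_closure_range_single_one_of_nonneg (nonneg_of_mem_toricSemigroup hm h2))
      rintro _ ⟨j, rfl⟩
      exact single_one_mem_toricGenerators z j
    · rw [← sub_add_cancel m (descentGenerator z m)]
      refine add_mem (ih _ (sub_descentGenerator_mem_toricSemigroup hm (by omega)) ?_)
        (AddSubmonoid.subset_closure (descentGenerator_mem_toricGenerators z m))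
      simp only [descentGenerator, Pi.sub_apply, if_true]
      omega

theorem fg_toricSemigroup [Fintype ι] (z : ι) : (toricSemigroup z).FG :=
  (AddSubmonoid.fg_iff _).2
    ⟨_, closure_toricGenerators z, (Set.finite_Icc _ _).subset Set.inter_subset_right⟩

end FiniteGeneration

theorem coe_toricSemigroup_nat_zero :
    (toricSemigroup (0 : ℕ) : Set (ℕ → ℤ)) =
      {m : ℕ → ℤ | 0 ≤ m 0 ∧ ∀ j, 1 ≤ j → 0 ≤ m 0 + 2 * m j} := by
  simp only [SetLike.coe, toricSemigroup, Nat.one_le_iff_ne_zero]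

/-- The semigroup `𝒮 = {m ∈ ℤ^ω | m₀ ≥ 0 and m₀ + 2mⱼ ≥ 0 for all j ≥ 1}` of the
affine toric ind-variety `{y² = x₁⋯xᵢ}` is a pro-affine semigroup: it is a
submonoid of `ℤ^ω`, closed in the product topology, and its projection to the
first `i` coordinates equals the finitely generated semigroup
`Sᵢ = {m ∈ ℤ^i | m₀ ≥ 0 and m₀ + 2mⱼ ≥ 0 for all j ≠ 0}`. -/
theorem example_toric_ind_semigroup_proaffine :
    ((0 : ℕ → ℤ) ∈ {m : ℕ → ℤ | 0 ≤ m 0 ∧ ∀ j, 1 ≤ j → 0 ≤ m 0 + 2 * m j} ∧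
      ∀ a ∈ {m : ℕ → ℤ | 0 ≤ m 0 ∧ ∀ j, 1 ≤ j → 0 ≤ m 0 + 2 * m j},
        ∀ b ∈ {m : ℕ → ℤ | 0 ≤ m 0 ∧ ∀ j, 1 ≤ j → 0 ≤ m 0 + 2 * m j},
          a + b ∈ {m : ℕ → ℤ | 0 ≤ m 0 ∧ ∀ j, 1 ≤ j → 0 ≤ m 0 + 2 * m j}) ∧
    IsClosed {m : ℕ → ℤ | 0 ≤ m 0 ∧ ∀ j, 1 ≤ j → 0 ≤ m 0 + 2 * m j} ∧
    ∀ i : ℕ, ∀ hi : 0 < i,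
      projZ i '' {m : ℕ → ℤ | 0 ≤ m 0 ∧ ∀ j, 1 ≤ j → 0 ≤ m 0 + 2 * m j} =
          {m : Fin i → ℤ | 0 ≤ m ⟨0, hi⟩ ∧
            ∀ j : Fin i, j ≠ ⟨0, hi⟩ → 0 ≤ m ⟨0, hi⟩ + 2 * m j} ∧
        ∃ T : AddSubmonoid (Fin i → ℤ),
          (T : Set (Fin i → ℤ)) =
              {m : Fin i → ℤ | 0 ≤ m ⟨0, hi⟩ ∧
                ∀ j : Fin i, j ≠ ⟨0, hi⟩ → 0 ≤ m ⟨0, hi⟩ + 2 * m j} ∧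
            T.FG := by
  rw [← coe_toricSemigroup_nat_zero]
  refine ⟨⟨zero_mem _, fun a ha b hb => add_mem ha hb⟩, isClosed_toricSemigroup 0,
    fun i hi => ⟨image_comp_toricSemigroup Fin.val_injective ⟨0, hi⟩,
      toricSemigroup ⟨0, hi⟩, rfl, fg_toricSemigroup _⟩⟩
end
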